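/- Let H be a Hopf algebra over a field k, let R ∈ H⊗H be invertible with R·Δ(h) = Δᵒᵖ(h)·R for all h ∈ H (where Δᵒᵖ is Δ followed by the flip), (Δ⊗id)(R) = R₁₃R₂₃, (id⊗Δ)(R) = R₁₃R₁₂, and R·(S⊗id)(R) = 1⊗1, and let g ∈ H be group-like (Δ(g) = g⊗g, ε(g) = 1) with g·S²(h) = h·g for all h ∈ H. Set P := R₂₁·R·(g⊗1) ∈ H⊗H and Φ_P(φ) = (φ⊗id)(P). Then for all trace forms φ, ψ ∈ H* (i.e., φ(ab) = φ(ba) and ψ(ab) = ψ(ba) for all a, b ∈ H): Φ_P(φ) lies in the center Z(H) of H, and Φ_P(φ*ψ) = Φ_P(φ)·Φ_P(ψ), where * is the convolution product on H*. -/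

import Mathlib

/-!
Write `Q = R₂₁ R` and `P = Q (g ⊗ 1)`. Quasi-cocommutativity makes `Q` commute with `Δ(H)`.
The Sweedler identities `1 ⊗ x = Σ (S x₁ ⊗ 1) Δ x₂` and `g ⊗ x = Σ Δ x₂ (g S x₁ ⊗ 1)` (the latter
because `g` implements `S²`) let the factor `S x₁ ⊗ 1` travel once around `P` under the trace form
`φ`, which shows that `Φ_P(φ)` commutes with `x`. For multiplicativity, the coproduct axioms
for `R` and `Δ g = g ⊗ g` give `(Δ ⊗ id) P = (R₂₁)₂₃ P₁₃ (R (g ⊗ 1))₂₃`; slicing with `φ` turns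
`P₁₃` into the central element `1 ⊗ Φ_P(φ)`, and slicing the result with `ψ` gives
`Φ_P(φ) Φ_P(ψ)`.
-/

open TensorProduct
noncomputable section

def antip (k H : Type*) [Field k] [Ring H] [HopfAlgebra k H] : H →ₗ[k] H :=
  HopfAlgebra.antipode (R := k)

def antipSq (k H : Type*) [Field k] [Ring H] [HopfAlgebra k H] : H →ₗ[k] H :=
  antip k H ∘ₗ antip k H

/-- The convolution product on `H*`. -/
def conv (k H : Type*) [Field k] [Ring H] [Bialgebra k H]
    (φ ψ : H →ₗ[k] k) : H →ₗ[k] k :=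
  LinearMap.mul' k k ∘ₗ TensorProduct.map φ ψ ∘ₗ Coalgebra.comul

/-- `Φ_P(ξ) = (ξ ⊗ id)(P)`. -/
def PhiP (k H : Type*) [Field k] [Ring H] [HopfAlgebra k H]
    (P : H ⊗[k] H) (ξ : H →ₗ[k] k) : H :=
  TensorProduct.lid k H (TensorProduct.map ξ LinearMap.id P)

open Coalgebra HopfAlgebra
open Algebra.TensorProduct (includeRight)

section Slice

variable {k A B : Type*} [CommSemiring k]

def slice [AddCommMonoid A] [Module k A] [AddCommMonoid B] [Module k B] (φ : A →ₗ[k] k) :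
    A ⊗[k] B →ₗ[k] B :=
  TensorProduct.lid k B ∘ₗ φ.rTensor B

section Module

variable [AddCommMonoid A] [Module k A] [AddCommMonoid B] [Module k B] (φ : A →ₗ[k] k)

@[simp] lemma slice_tmul (a : A) (b : B) : slice φ (a ⊗ₜ[k] b) = φ a • b := rfl

lemma slice_lTensor {C : Type*} [AddCommMonoid C] [Module k C] (f : B →ₗ[k] C) (t : A ⊗[k] B) :
    slice φ (f.lTensor A t) = f (slice φ t) := by
  induction t using TensorProduct.induction_on with
  | zero => simp
  | tmul a b => simp
  | add u v hu hv => simp [hu, hv]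

end Module

variable [Semiring A] [Algebra k A] [Semiring B] [Algebra k B] (φ : A →ₗ[k] k)

lemma slice_mul_one_tmul (t : A ⊗[k] B) (x : B) :
    slice φ (t * (1 ⊗ₜ x)) = slice φ t * x := by
  induction t using TensorProduct.induction_on with
  | zero => simp
  | tmul a b => simp
  | add u v hu hv => simp [add_mul, hu, hv]

lemma slice_one_tmul_mul (t : A ⊗[k] B) (x : B) :
    slice φ ((1 ⊗ₜ x) * t) = x * slice φ t := by
  induction t using TensorProduct.induction_on with
  | zero => simp
  | tmul a b => simp
  | add u v hu hv => simp [mul_add, hu, hv]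

lemma slice_mul_tmul_one_of_trace (hφ : ∀ a b : A, φ (a * b) = φ (b * a))
    (t : A ⊗[k] B) (a : A) :
    slice φ (t * (a ⊗ₜ 1)) = slice φ ((a ⊗ₜ 1) * t) := by
  induction t using TensorProduct.induction_on with
  | zero => simp
  | tmul a' b => simp [hφ a']
  | add u v hu hv => simp [add_mul, mul_add, hu, hv]

end Slice

lemma PhiP_eq_slice (k H : Type*) [Field k] [Ring H] [HopfAlgebra k H]
    (P : H ⊗[k] H) (ξ : H →ₗ[k] k) : PhiP k H P ξ = slice ξ P := rfl

section Coalgebra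

variable {k C A : Type*} [CommSemiring k] [AddCommMonoid C] [Module k C] [Coalgebra k C]
  [Semiring A] [Algebra k A]

lemma rTensor_assoc_symm_lTensor_comul (ρ : C ⊗[k] C →ₗ[k] A)
    (hρ : ρ ∘ₗ comul = Algebra.linearMap k A ∘ₗ counit) (x : C) :
    ρ.rTensor C ((TensorProduct.assoc k C C C).symm (comul.lTensor C (comul x))) = 1 ⊗ₜ x := by
  rw [coassoc_symm_apply, ← LinearMap.rTensor_comp_apply, hρ, LinearMap.rTensor_comp_apply,
    rTensor_counit_comul]
  simp

end Coalgebra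

section Hopf

variable {k H : Type*} [CommSemiring k] [Semiring H] [HopfAlgebra k H] {ι : Type*} {x : H}

lemma sum_antipode_tmul_one_mul_comul (r : Repr k x ι) :
    ∑ i ∈ r.index, (antipode k (r.left i) ⊗ₜ[k] (1 : H)) * comul (r.right i) = 1 ⊗ₜ x := by
  set ρ : H ⊗[k] H →ₗ[k] H := LinearMap.mul' k H ∘ₗ (antipode k).rTensor H
  have hρ : ρ ∘ₗ comul = Algebra.linearMap k H ∘ₗ counit := by
    simp only [ρ, LinearMap.comp_assoc, mul_antipode_rTensor_comul]
  have term (a : H) (t : H ⊗[k] H) :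
      (antipode k a ⊗ₜ[k] (1 : H)) * t =
        ρ.rTensor H ((TensorProduct.assoc k H H H).symm (a ⊗ₜ t)) := by
    induction t using TensorProduct.induction_on with
    | zero => simp
    | tmul b c => simp [ρ]
    | add u v hu hv => simp [mul_add, TensorProduct.tmul_add, hu, hv]
  simp_rw [term, ← rTensor_assoc_symm_lTensor_comul ρ hρ x, ← r.eq, map_sum,
    LinearMap.lTensor_tmul]

lemma sum_comul_mul_tmul_one_of_antipode_sq {g : H}
    (hg : ∀ h, g * antipode k (antipode k h) = h * g) (r : Repr k x ι) :
    ∑ i ∈ r.index, comul (r.right i) * ((g * antipode k (r.left i)) ⊗ₜ[k] (1 : H)) = g ⊗ₜ x := by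
  set ρ : H ⊗[k] H →ₗ[k] H := LinearMap.mul' k H ∘ₗ (antipode k).lTensor H
  have hρ : ρ ∘ₗ comul = Algebra.linearMap k H ∘ₗ counit := by
    simp only [ρ, LinearMap.comp_assoc, mul_antipode_lTensor_comul]
  set σ : H →ₗ[k] H := LinearMap.mulLeft k g ∘ₗ antipode k
  have term (a : H) (t : H ⊗[k] H) :
      t * ((g * antipode k a) ⊗ₜ[k] (1 : H)) =
        σ.rTensor H (ρ.rTensor H ((TensorProduct.assoc k H H H).symm (a ⊗ₜ t))) := by
    induction t using TensorProduct.induction_on with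
    | zero => simp
    | tmul b c =>
      simp [ρ, σ, antipode_mul_antidistrib, ← mul_assoc, hg]
    | add u v hu hv => simp [add_mul, TensorProduct.tmul_add, hu, hv]
  simp_rw [term, ← map_sum, ← LinearMap.lTensor_tmul, ← map_sum, r.eq,
    rTensor_assoc_symm_lTensor_comul ρ hρ x]
  simp [σ]

end Hopf

section Center

variable {k H : Type*} [CommSemiring k] [Semiring H]

lemma comm_mul_self_commute_comul [Bialgebra k H] {R : H ⊗[k] H}
    (hcomm : ∀ h : H, R * comul h = TensorProduct.comm k H H (comul h) * R) (h : H) :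
    TensorProduct.comm k H H R * R * comul h = comul h * (TensorProduct.comm k H H R * R) := by
  have hflip : TensorProduct.comm k H H R * TensorProduct.comm k H H (comul h) =
      comul h * TensorProduct.comm k H H R := by
    have comm_mul (u v : H ⊗[k] H) : TensorProduct.comm k H H (u * v) =
        TensorProduct.comm k H H u * TensorProduct.comm k H H v :=
      map_mul (Algebra.TensorProduct.comm k H H) u v
    simpa [comm_mul] using congr(TensorProduct.comm k H H $(hcomm h))
  rw [mul_assoc, hcomm, ← mul_assoc, hflip, mul_assoc]

variable [HopfAlgebra k H]

lemma slice_mul_comm_of_commute_comul (φ : H →ₗ[k] k) (hφ : ∀ a b : H, φ (a * b) = φ (b * a))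
    {Q : H ⊗[k] H} (hQ : ∀ h : H, Q * comul h = comul h * Q)
    {g : H} (hg : ∀ h, g * antipode k (antipode k h) = h * g) (x : H) :
    slice φ (Q * (g ⊗ₜ 1)) * x = x * slice φ (Q * (g ⊗ₜ 1)) := by
  set r := ℛ k x
  calc slice φ (Q * (g ⊗ₜ 1)) * x
      = slice φ (Q * (g ⊗ₜ x)) := by
        rw [← slice_mul_one_tmul, mul_assoc, Algebra.TensorProduct.tmul_mul_tmul, mul_one, one_mul]
    _ = ∑ i ∈ r.index,
          slice φ (comul (r.right i) * Q * (g ⊗ₜ 1) * (antipode k (r.left i) ⊗ₜ 1)) := by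
        rw [← sum_comul_mul_tmul_one_of_antipode_sq hg r, Finset.mul_sum, map_sum]
        refine Finset.sum_congr rfl fun i _ => ?_
        have hsplit : (g * antipode k (r.left i)) ⊗ₜ[k] (1 : H) =
            (g ⊗ₜ 1) * (antipode k (r.left i) ⊗ₜ 1) := by
          rw [Algebra.TensorProduct.tmul_mul_tmul, one_mul]
        rw [hsplit, ← mul_assoc, hQ]
        simp only [mul_assoc]
    _ = ∑ i ∈ r.index,
          slice φ ((antipode k (r.left i) ⊗ₜ 1) * comul (r.right i) * (Q * (g ⊗ₜ 1))) := by
        refine Finset.sum_congr rfl fun i _ => ?_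
        rw [slice_mul_tmul_one_of_trace φ hφ]
        simp only [mul_assoc]
    _ = x * slice φ (Q * (g ⊗ₜ 1)) := by
        rw [← map_sum, ← Finset.sum_mul, sum_antipode_tmul_one_mul_comul, slice_one_tmul_mul]

end Center

section Braiding

variable {k H : Type*} [CommSemiring k] [Semiring H] [Bialgebra k H]

-- With `H ⊗ H ⊗ H` bracketed as `H ⊗ (H ⊗ H)`, `leg13 k H u = u₁₃` and `1 ⊗ₜ u = u₂₃`.
variable (k H) in
abbrev leg13 : H ⊗[k] H →ₐ[k] H ⊗[k] (H ⊗[k] H) :=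
  Algebra.TensorProduct.lTensor H includeRight

variable (k H) in
def comulRTensor : H ⊗[k] H →ₐ[k] H ⊗[k] (H ⊗[k] H) :=
  (Algebra.TensorProduct.assoc k k k H H H).toAlgHom.comp
    (Algebra.TensorProduct.rTensor H (Bialgebra.comulAlgHom k H))

lemma comulRTensor_apply (t : H ⊗[k] H) :
    comulRTensor k H t =
      Algebra.TensorProduct.assoc k k k H H H (TensorProduct.map comul LinearMap.id t) := by
  induction t using TensorProduct.induction_on with
  | zero => simp
  | tmul a b => rfl
  | add u v hu hv => simp only [map_add, hu, hv]

lemma comulRTensor_tmul (a b : H) :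
    comulRTensor k H (a ⊗ₜ b) = Algebra.TensorProduct.assoc k k k H H H (comul a ⊗ₜ b) := rfl

lemma comulRTensor_of_map_comul_id {R : H ⊗[k] H}
    (hΔ1 : TensorProduct.map comul LinearMap.id R =
      TensorProduct.map ((TensorProduct.mk k H H).flip 1) LinearMap.id R *
        TensorProduct.map (TensorProduct.mk k H H 1) LinearMap.id R) :
    comulRTensor k H R = leg13 k H R * (1 ⊗ₜ R) := by
  have h13 (t : H ⊗[k] H) : Algebra.TensorProduct.assoc k k k H H H
      (TensorProduct.map ((TensorProduct.mk k H H).flip 1) LinearMap.id t) =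
        leg13 k H t := by
    induction t using TensorProduct.induction_on with
    | zero => simp
    | tmul a b => rfl
    | add u v hu hv => simp only [map_add, hu, hv]
  have h23 (t : H ⊗[k] H) : Algebra.TensorProduct.assoc k k k H H H
      (TensorProduct.map (TensorProduct.mk k H H 1) LinearMap.id t) = 1 ⊗ₜ t := by
    induction t using TensorProduct.induction_on with
    | zero => simp
    | tmul a b => rfl
    | add u v hu hv => simp only [map_add, hu, hv, TensorProduct.tmul_add]
  rw [comulRTensor_apply, hΔ1, map_mul, h13, h23]

lemma comulRTensor_comm_of_map_id_comul {R : H ⊗[k] H}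
    (hΔ2 : TensorProduct.map LinearMap.id comul R =
      TensorProduct.map LinearMap.id (TensorProduct.mk k H H 1) R *
        TensorProduct.map LinearMap.id ((TensorProduct.mk k H H).flip 1) R) :
    comulRTensor k H (TensorProduct.comm k H H R) =
      (1 ⊗ₜ TensorProduct.comm k H H R) * leg13 k H (TensorProduct.comm k H H R) := by
  set e : H ⊗[k] (H ⊗[k] H) ≃ₐ[k] H ⊗[k] (H ⊗[k] H) :=
    (Algebra.TensorProduct.comm k H (H ⊗[k] H)).trans (Algebra.TensorProduct.assoc k k k H H H)
  have hΔ (t : H ⊗[k] H) : comulRTensor k H (TensorProduct.comm k H H t) =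
      e (TensorProduct.map LinearMap.id comul t) := by
    induction t using TensorProduct.induction_on with
    | zero => simp
    | tmul a b => rfl
    | add u v hu hv => simp only [map_add, hu, hv]
  have h13 (t : H ⊗[k] H) : e (TensorProduct.map LinearMap.id (TensorProduct.mk k H H 1) t) =
      1 ⊗ₜ TensorProduct.comm k H H t := by
    induction t using TensorProduct.induction_on with
    | zero => simp
    | tmul a b => rfl
    | add u v hu hv => simp only [map_add, hu, hv, TensorProduct.tmul_add]
  have h12 (t : H ⊗[k] H) :
      e (TensorProduct.map LinearMap.id ((TensorProduct.mk k H H).flip 1) t) =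
        leg13 k H (TensorProduct.comm k H H t) := by
    induction t using TensorProduct.induction_on with
    | zero => simp
    | tmul a b => rfl
    | add u v hu hv => simp only [map_add, hu, hv]
  rw [hΔ, hΔ2, map_mul, h13, h12]

lemma comulRTensor_braiding {R : H ⊗[k] H}
    (hΔ1 : TensorProduct.map comul LinearMap.id R =
      TensorProduct.map ((TensorProduct.mk k H H).flip 1) LinearMap.id R *
        TensorProduct.map (TensorProduct.mk k H H 1) LinearMap.id R)
    (hΔ2 : TensorProduct.map LinearMap.id comul R =
      TensorProduct.map LinearMap.id (TensorProduct.mk k H H 1) R *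
        TensorProduct.map LinearMap.id ((TensorProduct.mk k H H).flip 1) R)
    {g : H} (hg : comul (R := k) g = g ⊗ₜ g) :
    comulRTensor k H (TensorProduct.comm k H H R * R * (g ⊗ₜ 1)) =
      (1 ⊗ₜ TensorProduct.comm k H H R) * leg13 k H (TensorProduct.comm k H H R * R * (g ⊗ₜ 1)) *
        (1 ⊗ₜ (R * (g ⊗ₜ 1))) := by
  have hgg : comulRTensor k H (g ⊗ₜ[k] (1 : H)) = leg13 k H (g ⊗ₜ 1) * (1 ⊗ₜ (g ⊗ₜ 1)) := by
    simp [comulRTensor_tmul, hg]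
  have hcomm : (1 ⊗ₜ R) * leg13 k H (g ⊗ₜ[k] (1 : H)) = leg13 k H (g ⊗ₜ 1) * (1 ⊗ₜ R) := by
    simp [← Algebra.TensorProduct.one_def]
  have one_tmul_mul (u v : H ⊗[k] H) : (1 : H) ⊗ₜ[k] (u * v) = (1 ⊗ₜ u) * (1 ⊗ₜ v) := by
    rw [Algebra.TensorProduct.tmul_mul_tmul, one_mul]
  simp only [map_mul, comulRTensor_of_map_comul_id hΔ1, comulRTensor_comm_of_map_id_comul hΔ2,
    hgg, one_tmul_mul, mul_assoc]
  rw [← mul_assoc (1 ⊗ₜ R), hcomm, mul_assoc]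

end Braiding

section Convolution

variable {k H : Type*} [Field k] [Ring H] [Bialgebra k H]

lemma slice_slice_comulRTensor (φ ψ : H →ₗ[k] k) (P : H ⊗[k] H) :
    slice ψ (slice φ (comulRTensor k H P)) = slice (conv k H φ ψ) P := by
  induction P using TensorProduct.induction_on with
  | zero => simp
  | add u v hu hv => simp only [map_add, hu, hv]
  | tmul a b =>
    have key (t : H ⊗[k] H) :
        slice ψ (slice φ (Algebra.TensorProduct.assoc k k k H H H (t ⊗ₜ b))) =
          LinearMap.mul' k k (TensorProduct.map φ ψ t) • b := by
      induction t using TensorProduct.induction_on with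
      | zero => simp
      | add u v hu hv => simp only [map_add, TensorProduct.add_tmul, hu, hv, add_smul]
      | tmul c d => simp [TensorProduct.smul_tmul', mul_smul]
    rw [comulRTensor_tmul, key, slice_tmul, conv]
    rfl

lemma slice_conv_braiding {R : H ⊗[k] H}
    (hΔ1 : TensorProduct.map comul LinearMap.id R =
      TensorProduct.map ((TensorProduct.mk k H H).flip 1) LinearMap.id R *
        TensorProduct.map (TensorProduct.mk k H H 1) LinearMap.id R)
    (hΔ2 : TensorProduct.map LinearMap.id comul R =
      TensorProduct.map LinearMap.id (TensorProduct.mk k H H 1) R *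
        TensorProduct.map LinearMap.id ((TensorProduct.mk k H H).flip 1) R)
    {g : H} (hg : comul (R := k) g = g ⊗ₜ g) (φ ψ : H →ₗ[k] k)
    (hcenter : ∀ a : H, slice φ (TensorProduct.comm k H H R * R * (g ⊗ₜ 1)) * a =
      a * slice φ (TensorProduct.comm k H H R * R * (g ⊗ₜ 1))) :
    slice (conv k H φ ψ) (TensorProduct.comm k H H R * R * (g ⊗ₜ 1)) =
      slice φ (TensorProduct.comm k H H R * R * (g ⊗ₜ 1)) *
        slice ψ (TensorProduct.comm k H H R * R * (g ⊗ₜ 1)) := by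
  set P := TensorProduct.comm k H H R * R * (g ⊗ₜ 1)
  set z := slice φ P
  have hz (t : H ⊗[k] H) : Commute (1 ⊗ₜ z) t := by
    induction t using TensorProduct.induction_on with
    | zero => exact Commute.zero_right _
    | tmul a b => exact (Commute.one_left a).tmul (hcenter b)
    | add u v hu hv => exact hu.add_right hv
  calc slice (conv k H φ ψ) P
      = slice ψ (slice φ (comulRTensor k H P)) := (slice_slice_comulRTensor φ ψ P).symm
    _ = slice ψ (TensorProduct.comm k H H R * (1 ⊗ₜ z) * (R * (g ⊗ₜ 1))) := by
        rw [comulRTensor_braiding hΔ1 hΔ2 hg, slice_mul_one_tmul, slice_one_tmul_mul]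
        congr 3
        exact slice_lTensor φ (includeRight : H →ₐ[k] H ⊗[k] H).toLinearMap P
    _ = z * slice ψ P := by
        rw [← (hz _).eq, mul_assoc, ← mul_assoc _ R, slice_one_tmul_mul]

end Convolution

theorem stmt19_general (k H : Type*) [Field k] [Ring H] [HopfAlgebra k H]
    (R : H ⊗[k] H)
    (hcomm : ∀ h : H,
      R * Coalgebra.comul h = (TensorProduct.comm k H H (Coalgebra.comul h)) * R)
    (hΔ1 : TensorProduct.map Coalgebra.comul LinearMap.id R =
      TensorProduct.map ((TensorProduct.mk k H H).flip 1) LinearMap.id R *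
        TensorProduct.map (TensorProduct.mk k H H 1) LinearMap.id R)
    (hΔ2 : TensorProduct.map LinearMap.id Coalgebra.comul R =
      TensorProduct.map LinearMap.id (TensorProduct.mk k H H 1) R *
        TensorProduct.map LinearMap.id ((TensorProduct.mk k H H).flip 1) R)
    (g : H) (hg1 : Coalgebra.comul (R := k) g = g ⊗ₜ[k] g)
    (hg3 : ∀ h : H, g * antipSq k H h = h * g) :
    ∀ φ ψ : H →ₗ[k] k,
      (∀ a b : H, φ (a * b) = φ (b * a)) →
      (∀ a b : H, ψ (a * b) = ψ (b * a)) →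
      (∀ a : H,
        PhiP k H ((TensorProduct.comm k H H R) * R * (g ⊗ₜ[k] 1)) φ * a =
          a * PhiP k H ((TensorProduct.comm k H H R) * R * (g ⊗ₜ[k] 1)) φ) ∧
      PhiP k H ((TensorProduct.comm k H H R) * R * (g ⊗ₜ[k] 1)) (conv k H φ ψ) =
        PhiP k H ((TensorProduct.comm k H H R) * R * (g ⊗ₜ[k] 1)) φ *
          PhiP k H ((TensorProduct.comm k H H R) * R * (g ⊗ₜ[k] 1)) ψ := by
  intro φ ψ hφ _
  simp only [PhiP_eq_slice]
  have hcenter := slice_mul_comm_of_commute_comul φ hφ (comm_mul_self_commute_comul hcomm) hg3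
  exact ⟨hcenter, slice_conv_braiding hΔ1 hΔ2 hg1 φ ψ hcenter⟩

theorem stmt19 (k H : Type*) [Field k] [Ring H] [HopfAlgebra k H]
    (R : H ⊗[k] H) (hunit : IsUnit R)
    (hcomm : ∀ h : H,
      R * Coalgebra.comul h = (TensorProduct.comm k H H (Coalgebra.comul h)) * R)
    (hΔ1 : TensorProduct.map Coalgebra.comul LinearMap.id R =
      TensorProduct.map ((TensorProduct.mk k H H).flip 1) LinearMap.id R *
        TensorProduct.map (TensorProduct.mk k H H 1) LinearMap.id R)
    (hΔ2 : TensorProduct.map LinearMap.id Coalgebra.comul R =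
      TensorProduct.map LinearMap.id (TensorProduct.mk k H H 1) R *
        TensorProduct.map LinearMap.id ((TensorProduct.mk k H H).flip 1) R)
    (hS : R * TensorProduct.map (antip k H) LinearMap.id R = 1)
    (g : H) (hg1 : Coalgebra.comul (R := k) g = g ⊗ₜ[k] g)
    (hg2 : Coalgebra.counit (R := k) g = (1 : k))
    (hg3 : ∀ h : H, g * antipSq k H h = h * g) :
    ∀ φ ψ : H →ₗ[k] k,
      (∀ a b : H, φ (a * b) = φ (b * a)) →
      (∀ a b : H, ψ (a * b) = ψ (b * a)) →
      (∀ a : H,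
        PhiP k H ((TensorProduct.comm k H H R) * R * (g ⊗ₜ[k] 1)) φ * a =
          a * PhiP k H ((TensorProduct.comm k H H R) * R * (g ⊗ₜ[k] 1)) φ) ∧
      PhiP k H ((TensorProduct.comm k H H R) * R * (g ⊗ₜ[k] 1)) (conv k H φ ψ) =
        PhiP k H ((TensorProduct.comm k H H R) * R * (g ⊗ₜ[k] 1)) φ *
          PhiP k H ((TensorProduct.comm k H H R) * R * (g ⊗ₜ[k] 1)) ψ :=
  stmt19_general k H R hcomm hΔ1 hΔ2 g hg1 hg3
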